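/- Let ε > 0, let f and g be two Borel-measurable functions ℝ^d → ℝ^d with finite range, suppose ‖g − f‖_∞ := sup_{u ∈ ℝ^d} ‖g(u) − f(u)‖ < ∞, and let θ ∈ ℝ^d have all components nonzero. Then the operator norm of the matrix with (i,j) entry (1/(ε θ_j)) ∫ (g(θ ⊙ exp(εz − ε²𝟏/2)) − f(θ ⊙ exp(εz − ε²𝟏/2)))_i z_j dγ(z) (the difference of the Jacobians of the multiplicatively perturbed layers at θ) is at most (√d / (ε · min_i |θ_i|)) · ‖g − f‖_∞. -/

import Mathlib

open MeasureTheory ProbabilityTheory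

/-- The standard Gaussian measure on `ℝ^d`. -/
noncomputable def stdGaussian (d : ℕ) : Measure (EuclideanSpace ℝ (Fin d)) :=
  (Measure.pi fun _ : Fin d => gaussianReal 0 1).map
    (MeasurableEquiv.toLp 2 (Fin d → ℝ))

/-- The multiplicative perturbation `θ ⊙ exp(εz − ε²𝟏/2)`, with `i`-th component
`θ_i exp(ε z_i − ε²/2)`. -/
noncomputable def mpert {d : ℕ} (ε : ℝ) (θ z : EuclideanSpace ℝ (Fin d)) :
    EuclideanSpace ℝ (Fin d) :=
  WithLp.toLp 2 fun i => θ i * Real.exp (ε * z i - ε ^ 2 / 2)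

namespace Stmt10Aux

open Real Filter
open scoped ENNReal NNReal

lemma integrable_sq_mul_exp : Integrable (fun x : ℝ => x ^ 2 * Real.exp (-(2⁻¹:ℝ) * x ^ 2)) := by
  have h := (integrable_exp_neg_mul_sq (b := (4⁻¹:ℝ)) (by norm_num)).const_mul 4
  refine h.mono' ?_ ?_
  · exact (Continuous.aestronglyMeasurable (by fun_prop))
  · refine Eventually.of_forall fun x => ?_
    have h1 : x ^ 2 ≤ 4 * Real.exp ((4⁻¹:ℝ) * x ^ 2) := by
      have := Real.add_one_le_exp ((4⁻¹:ℝ) * x ^ 2)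
      nlinarith [Real.exp_nonneg ((4⁻¹:ℝ) * x ^ 2), sq_nonneg x]
    have h2 : (0:ℝ) < Real.exp (-(2⁻¹:ℝ) * x ^ 2) := Real.exp_pos _
    rw [Real.norm_eq_abs, abs_of_nonneg (by positivity)]
    calc x ^ 2 * Real.exp (-(2⁻¹:ℝ) * x ^ 2)
        ≤ (4 * Real.exp ((4⁻¹:ℝ) * x ^ 2)) * Real.exp (-(2⁻¹:ℝ) * x ^ 2) :=
          mul_le_mul_of_nonneg_right h1 h2.le
      _ = 4 * Real.exp (-(4⁻¹:ℝ) * x ^ 2) := by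
          rw [mul_assoc, ← Real.exp_add]; ring_nf

lemma integral_sq_mul_exp : ∫ x : ℝ, x ^ 2 * Real.exp (-(2⁻¹:ℝ) * x ^ 2) = Real.sqrt (2 * π) := by
  have hu : ∀ x : ℝ, HasDerivAt (fun y : ℝ => y) 1 x := fun x => hasDerivAt_id x
  have hv : ∀ x : ℝ, HasDerivAt (fun y : ℝ => -Real.exp (-(2⁻¹:ℝ) * y ^ 2))
      (x * Real.exp (-(2⁻¹:ℝ) * x ^ 2)) x := by
    intro x
    have h1 : HasDerivAt (fun y : ℝ => -(2⁻¹:ℝ) * y ^ 2) (-(2⁻¹:ℝ) * (2 * x)) x :=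
      ((hasDerivAt_pow 2 x).const_mul _).congr_deriv (by ring)
    have := (h1.exp).neg
    exact this.congr_deriv (by ring)
  have huv' : Integrable ((fun y : ℝ => y) * fun x => x * Real.exp (-(2⁻¹:ℝ) * x ^ 2)) := by
    have := integrable_sq_mul_exp
    refine this.congr (Eventually.of_forall fun x => ?_)
    simp [Pi.mul_apply]; ring
  have hu'v : Integrable ((fun _ : ℝ => (1:ℝ)) * fun y => -Real.exp (-(2⁻¹:ℝ) * y ^ 2)) := by
    have := (integrable_exp_neg_mul_sq (b := (2⁻¹:ℝ)) (by norm_num)).neg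
    refine this.congr (Eventually.of_forall fun x => ?_)
    simp [Pi.mul_apply]
  have huv : Integrable ((fun y : ℝ => y) * fun y => -Real.exp (-(2⁻¹:ℝ) * y ^ 2)) := by
    have := (integrable_mul_exp_neg_mul_sq (b := (2⁻¹:ℝ)) (by norm_num)).neg
    refine this.congr (Eventually.of_forall fun x => ?_)
    simp [Pi.mul_apply]
  have key := integral_mul_deriv_eq_deriv_mul_of_integrable (fun x _ => hu x) (fun x _ => hv x) huv' hu'v huv
  have h2 : ∫ x : ℝ, x ^ 2 * Real.exp (-(2⁻¹:ℝ) * x ^ 2)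
      = ∫ x : ℝ, x * (x * Real.exp (-(2⁻¹:ℝ) * x ^ 2)) := by
    congr 1; funext x; ring
  rw [h2, key]
  have h3 : ∫ x : ℝ, (1:ℝ) * (-Real.exp (-(2⁻¹:ℝ) * x ^ 2))
      = -∫ x : ℝ, Real.exp (-(2⁻¹:ℝ) * x ^ 2) := by
    rw [← integral_neg]; congr 1; funext x; ring
  rw [h3, neg_neg, integral_gaussian]
  norm_num
  exact mul_comm _ _

lemma meas_pdf_nnreal : Measurable (fun x => (gaussianPDFReal 0 1 x).toNNReal) :=
  (measurable_gaussianPDFReal 0 1).real_toNNReal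

lemma pdfReal_eq (x : ℝ) :
    gaussianPDFReal 0 1 x = (Real.sqrt (2 * π))⁻¹ * Real.exp (-(2⁻¹:ℝ) * x ^ 2) := by
  simp [gaussianPDFReal]
  ring_nf
  exact Or.inl trivial

lemma gaussianReal_eq : gaussianReal 0 1 = (volume : Measure ℝ).withDensity
    (fun x => ((gaussianPDFReal 0 1 x).toNNReal : ENNReal)) := by
  rw [gaussianReal_of_var_ne_zero 0 one_ne_zero]
  rfl

lemma integrable_sq_gaussianReal : Integrable (fun x : ℝ => x ^ 2) (gaussianReal 0 1) := by
  rw [gaussianReal_eq, integrable_withDensity_iff_integrable_smul meas_pdf_nnreal]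
  have : Integrable (fun x : ℝ => (Real.sqrt (2 * π))⁻¹ * (x ^ 2 * Real.exp (-(2⁻¹:ℝ) * x ^ 2))) :=
    integrable_sq_mul_exp.const_mul _
  refine this.congr (Filter.Eventually.of_forall fun x => ?_)
  show _ = (gaussianPDFReal 0 1 x).toNNReal • x ^ 2
  rw [NNReal.smul_def, smul_eq_mul, Real.coe_toNNReal _ (gaussianPDFReal_nonneg 0 1 x), pdfReal_eq]
  ring

lemma integral_sq_gaussianReal : ∫ x, x ^ 2 ∂(gaussianReal 0 1) = 1 := by
  rw [gaussianReal_eq, integral_withDensity_eq_integral_smul meas_pdf_nnreal]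
  have h : ∀ x : ℝ, (gaussianPDFReal 0 1 x).toNNReal • x ^ 2
      = (Real.sqrt (2 * π))⁻¹ * (x ^ 2 * Real.exp (-(2⁻¹:ℝ) * x ^ 2)) := by
    intro x
    rw [NNReal.smul_def, smul_eq_mul, Real.coe_toNNReal _ (gaussianPDFReal_nonneg 0 1 x),
      pdfReal_eq]
    ring
  simp_rw [h]
  rw [integral_const_mul, integral_sq_mul_exp, inv_mul_cancel₀]
  positivity

instance stdGaussian_prob (d : ℕ) : IsProbabilityMeasure (stdGaussian d) :=
  Measure.isProbabilityMeasure_map (MeasurableEquiv.toLp 2 (Fin d → ℝ)).measurable.aemeasurable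

lemma map_eval (d : ℕ) (j : Fin d) :
    (Measure.pi fun _ : Fin d => gaussianReal (0:ℝ) 1).map (fun x => x j) = gaussianReal 0 1 := by
  apply Measure.ext; intro s hs
  rw [Measure.map_apply (measurable_pi_apply j) hs]
  have h1 : (fun x : Fin d → ℝ => x j) ⁻¹' s
      = Set.pi Set.univ (Function.update (fun _ : Fin d => (Set.univ : Set ℝ)) j s) :=
    Set.eval_preimage
  rw [h1, Measure.pi_pi]
  rw [Finset.prod_eq_single j (fun i _ hij => by simp [Function.update_of_ne hij])
    (fun h => absurd (Finset.mem_univ j) h)]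
  simp

lemma measurable_coord (d : ℕ) (j : Fin d) :
    Measurable (fun z : EuclideanSpace ℝ (Fin d) => z j) := (measurable_pi_apply j).comp (WithLp.measurable_ofLp 2 _)

lemma integral_coord_stdGaussian (d : ℕ) (j : Fin d) (F : ℝ → ℝ)
    (hF : Measurable F) (hFi : Integrable F (gaussianReal 0 1)) :
    (∫ z, F (z j) ∂(stdGaussian d) = ∫ t, F t ∂(gaussianReal 0 1))
    ∧ Integrable (fun z => F (z j)) (stdGaussian d) := by
  constructor
  · rw [_root_.stdGaussian, integral_map_equiv]
    have h2 : ∫ x : Fin d → ℝ, F (x j) ∂(Measure.pi fun _ => gaussianReal 0 1)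
        = ∫ t, F t ∂((Measure.pi fun _ : Fin d => gaussianReal 0 1).map (fun x => x j)) := by
      rw [integral_map (measurable_pi_apply j).aemeasurable
        (by rw [map_eval]; exact hF.aestronglyMeasurable)]
    exact h2.trans (by rw [map_eval])
  · rw [_root_.stdGaussian]
    have h3 : Integrable (fun x : Fin d → ℝ => F (x j)) (Measure.pi fun _ => gaussianReal 0 1) := by
      have h := integrable_map_measure (μ := Measure.pi fun _ : Fin d => gaussianReal 0 1)
        (f := fun x : Fin d → ℝ => x j) (g := F)
        (by rw [map_eval]; exact hF.aestronglyMeasurable) (measurable_pi_apply j).aemeasurable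
      rw [map_eval] at h
      exact h.mp hFi
    exact (integrable_map_measure (g := fun z : EuclideanSpace ℝ (Fin d) => F (z j))
      (f := (MeasurableEquiv.toLp 2 (Fin d → ℝ)))
      ((hF.comp (measurable_coord d j)).aestronglyMeasurable)
      (MeasurableEquiv.toLp 2 (Fin d → ℝ)).measurable.aemeasurable).mpr h3

lemma abs_integral_mul_le {α : Type*} [MeasurableSpace α] (μ : Measure α)
    (F G : α → ℝ) (hF : Measurable F) (hG : Measurable G)
    (hF2 : Integrable (fun a => F a ^ 2) μ) (hG2 : Integrable (fun a => G a ^ 2) μ) :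
    |∫ a, F a * G a ∂μ| ≤ Real.sqrt (∫ a, F a ^ 2 ∂μ) * Real.sqrt (∫ a, G a ^ 2 ∂μ) := by
  have hFm : MemLp F 2 μ := (memLp_two_iff_integrable_sq hF.aestronglyMeasurable).mpr hF2
  have hGm : MemLp G 2 μ := (memLp_two_iff_integrable_sq hG.aestronglyMeasurable).mpr hG2
  have h2 : (2 : ℝ≥0∞) = ENNReal.ofReal (2:ℝ) := by
    rw [ENNReal.ofReal_ofNat]
  have hpq : Real.HolderConjugate 2 2 := Real.HolderConjugate.two_two
  have key := integral_mul_norm_le_Lp_mul_Lq (μ := μ) hpq (h2 ▸ hFm) (h2 ▸ hGm)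
  have e1 : ∀ (H : α → ℝ), (fun a => ‖H a‖ ^ (2:ℝ)) = fun a => H a ^ 2 := by
    intro H; funext a
    rw [show (2:ℝ) = ((2:ℕ):ℝ) by norm_num, Real.rpow_natCast, Real.norm_eq_abs, sq_abs]
  rw [show (fun a => ‖F a‖ ^ (2:ℝ)) = fun a => F a ^ 2 from e1 F,
    show (fun a => ‖G a‖ ^ (2:ℝ)) = fun a => G a ^ 2 from e1 G] at key
  calc |∫ a, F a * G a ∂μ| ≤ ∫ a, |F a * G a| ∂μ := by
        rw [← Real.norm_eq_abs]
        exact (norm_integral_le_integral_norm _).trans_eq (by simp [Real.norm_eq_abs, abs_mul])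
    _ = ∫ a, ‖F a‖ * ‖G a‖ ∂μ := by simp [abs_mul, Real.norm_eq_abs]
    _ ≤ (∫ a, F a ^ 2 ∂μ) ^ ((1:ℝ) / 2) * (∫ a, G a ^ 2 ∂μ) ^ ((1:ℝ) / 2) := key
    _ = Real.sqrt (∫ a, F a ^ 2 ∂μ) * Real.sqrt (∫ a, G a ^ 2 ∂μ) := by
        rw [Real.sqrt_eq_rpow, Real.sqrt_eq_rpow]

lemma coord_le {d : ℕ} (x : EuclideanSpace ℝ (Fin d)) (i : Fin d) : |x i| ≤ ‖x‖ := by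
  rw [EuclideanSpace.norm_eq]
  calc |x i| = Real.sqrt (‖x i‖ ^ 2) := by rw [Real.norm_eq_abs, Real.sqrt_sq_eq_abs, abs_abs]
    _ ≤ Real.sqrt (∑ j, ‖x j‖ ^ 2) := Real.sqrt_le_sqrt
        (Finset.single_le_sum (fun j _ => sq_nonneg ‖x j‖) (Finset.mem_univ i))

lemma norm_sq_eq {d : ℕ} (x : EuclideanSpace ℝ (Fin d)) : ‖x‖ ^ 2 = ∑ i, (x i) ^ 2 := by
  rw [EuclideanSpace.norm_eq, Real.sq_sqrt (Finset.sum_nonneg fun i _ => sq_nonneg _)]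
  simp [Real.norm_eq_abs, sq_abs]

end Stmt10Aux

open Stmt10Aux

/-- Jacobian precision for inexact oracles, multiplicative perturbation: the operator norm of
the matrix with entries `(1/(ε θ_j)) ∫ (g(θ ⊙ exp(εz − ε²𝟏/2)) − f(θ ⊙ exp(εz − ε²𝟏/2)))_i z_j
dγ(z)` is at most `(√d / (ε min_i |θ_i|)) ‖g − f‖∞`. -/
theorem stmt_10 {d : ℕ} (hd : 0 < d) (ε : ℝ) (hε : 0 < ε)
    (f g : EuclideanSpace ℝ (Fin d) → EuclideanSpace ℝ (Fin d))
    (hf_meas : Measurable f) (hg_meas : Measurable g)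
    (hf_fin : (Set.range f).Finite) (hg_fin : (Set.range g).Finite)
    (hbdd : BddAbove (Set.range fun u => ‖g u - f u‖))
    (θ : EuclideanSpace ℝ (Fin d)) (hθ : ∀ i, θ i ≠ 0) :
    ‖Matrix.toEuclideanCLM (𝕜 := ℝ)
        (Matrix.of fun i j : Fin d =>
          (ε * θ j)⁻¹ * ∫ z, (g (mpert ε θ z) - f (mpert ε θ z)) i * z j ∂(stdGaussian d))‖
      ≤ (Real.sqrt d / (ε * ⨅ i, |θ i|)) * ⨆ u, ‖g u - f u‖ := by
  classical
  have : Nonempty (Fin d) := ⟨⟨0, hd⟩⟩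
  set γ := stdGaussian d with hγ
  set C := ⨆ u, ‖g u - f u‖ with hC
  have hCb : ∀ u, ‖g u - f u‖ ≤ C := fun u => le_ciSup hbdd u
  have hC0 : 0 ≤ C := le_trans (norm_nonneg _) (hCb 0)
  obtain ⟨i₀, hi₀⟩ : ∃ i₀ : Fin d, ∀ i, |θ i₀| ≤ |θ i| :=
    Finite.exists_min fun i => |θ i|
  set m := ⨅ i, |θ i| with hm
  have hmeq : m = |θ i₀| :=
    le_antisymm (ciInf_le (Finite.bddBelow_range _) i₀) (le_ciInf hi₀)
  have hm0 : 0 < m := hmeq ▸ abs_pos.mpr (hθ i₀)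
  have hmle : ∀ j, m ≤ |θ j| := fun j => hmeq ▸ hi₀ j
  -- the perturbed difference
  set h : EuclideanSpace ℝ (Fin d) → EuclideanSpace ℝ (Fin d) :=
    fun z => g (mpert ε θ z) - f (mpert ε θ z) with hh
  have hmp : Measurable (mpert ε θ) := by
    apply (WithLp.measurable_toLp 2 _).comp
    apply measurable_pi_lambda
    intro i
    exact ((((measurable_coord d i).const_mul ε).sub_const _).exp).const_mul (θ i)
  have hhm : ∀ i, Measurable fun z => h z i := by
    intro i
    have e : (fun z => h z i) = fun z => (g (mpert ε θ z)) i - (f (mpert ε θ z)) i := rfl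
    rw [e]
    exact ((measurable_coord d i).comp (hg_meas.comp hmp)).sub
      ((measurable_coord d i).comp (hf_meas.comp hmp))
  have hhb : ∀ z i, |h z i| ≤ C := fun z i => (coord_le (h z) i).trans (hCb _)
  -- coordinate moments
  have hzsq : ∀ j, Integrable (fun z => (z j) ^ 2) γ ∧ ∫ z, (z j) ^ 2 ∂γ = 1 := by
    intro j
    have H := integral_coord_stdGaussian d j (fun t => t ^ 2)
      (measurable_id.pow_const 2) integrable_sq_gaussianReal
    exact ⟨H.2, H.1.trans integral_sq_gaussianReal⟩
  have hzint : ∀ j, Integrable (fun z => z j) γ := by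
    intro j
    have : MemLp (fun z : EuclideanSpace ℝ (Fin d) => z j) 2 γ :=
      (memLp_two_iff_integrable_sq (measurable_coord d j).aestronglyMeasurable).mpr (hzsq j).1
    exact this.integrable one_le_two
  -- squares of h coordinates
  have hint_hsq : ∀ i, Integrable (fun z => (h z i) ^ 2) γ := by
    intro i
    refine (integrable_const (C ^ 2)).mono' ((hhm i).pow_const 2).aestronglyMeasurable ?_
    refine Filter.Eventually.of_forall fun z => ?_
    rw [Real.norm_eq_abs, abs_of_nonneg (sq_nonneg _)]
    calc (h z i) ^ 2 = |h z i| ^ 2 := (sq_abs _).symm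
      _ ≤ C ^ 2 := pow_le_pow_left₀ (abs_nonneg _) (hhb z i) 2
  have hint_prod : ∀ i j, Integrable (fun z => h z i * z j) γ := by
    intro i j
    exact (hzint j).bdd_mul (hhm i).aestronglyMeasurable
      (Filter.Eventually.of_forall fun z => by rw [Real.norm_eq_abs]; exact hhb z i)
  -- second moments of h
  set A : Fin d → ℝ := fun i => ∫ z, (h z i) ^ 2 ∂γ with hA
  have hA0 : ∀ i, 0 ≤ A i := fun i => integral_nonneg fun z => sq_nonneg _
  have hAsum : ∑ i, A i ≤ C ^ 2 := by
    have e1 : ∑ i, A i = ∫ z, ∑ i, (h z i) ^ 2 ∂γ :=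
      (integral_finset_sum _ fun i _ => hint_hsq i).symm
    have e2 : ∀ z, ∑ i, (h z i) ^ 2 = ‖h z‖ ^ 2 := fun z => (norm_sq_eq (h z)).symm
    rw [e1]
    calc ∫ z, ∑ i, (h z i) ^ 2 ∂γ = ∫ z, ‖h z‖ ^ 2 ∂γ := by simp_rw [e2]
      _ ≤ ∫ _z, C ^ 2 ∂γ := by
          refine integral_mono ?_ (integrable_const _) fun z => ?_
          · simp_rw [← e2]; exact integrable_finset_sum _ fun i _ => hint_hsq i
          · exact pow_le_pow_left₀ (norm_nonneg _) (hCb _) 2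
      _ = C ^ 2 := by simp
  -- entries
  set E : Fin d → Fin d → ℝ := fun i j => ∫ z, h z i * z j ∂γ with hE
  have hEb : ∀ i j, (E i j) ^ 2 ≤ A i := by
    intro i j
    have hcs := abs_integral_mul_le γ (fun z => h z i) (fun z => z j) (hhm i)
      (measurable_coord d j) (hint_hsq i) (hzsq j).1
    rw [(hzsq j).2, Real.sqrt_one, mul_one] at hcs
    calc (E i j) ^ 2 = |E i j| ^ 2 := (sq_abs _).symm
      _ ≤ Real.sqrt (A i) ^ 2 := pow_le_pow_left₀ (abs_nonneg _) hcs 2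
      _ = A i := Real.sq_sqrt (hA0 i)
  -- the matrix
  set M : Matrix (Fin d) (Fin d) ℝ := Matrix.of fun i j : Fin d =>
    (ε * θ j)⁻¹ * ∫ z, (g (mpert ε θ z) - f (mpert ε θ z)) i * z j ∂(stdGaussian d) with hM
  have hMij : ∀ i j, M i j = (ε * θ j)⁻¹ * E i j := fun i j => rfl
  have hMsq : ∀ i j, (M i j) ^ 2 ≤ (ε * m)⁻¹ ^ 2 * A i := by
    intro i j
    rw [hMij, mul_pow]
    have habs : |(ε * θ j)⁻¹| = (ε * |θ j|)⁻¹ := by rw [abs_inv, abs_mul, abs_of_pos hε]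
    have hle : |(ε * θ j)⁻¹| ≤ (ε * m)⁻¹ := by
      rw [habs]
      exact inv_anti₀ (mul_pos hε hm0) (mul_le_mul_of_nonneg_left (hmle j) hε.le)
    have h1 : ((ε * θ j)⁻¹) ^ 2 ≤ ((ε * m)⁻¹) ^ 2 := by
      calc ((ε * θ j)⁻¹) ^ 2 = |(ε * θ j)⁻¹| ^ 2 := (sq_abs _).symm
        _ ≤ ((ε * m)⁻¹) ^ 2 := pow_le_pow_left₀ (abs_nonneg _) hle 2
    exact mul_le_mul h1 (hEb i j) (sq_nonneg _) (sq_nonneg _)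
  -- operator norm bound
  have hK0 : 0 ≤ Real.sqrt d / (ε * m) * C :=
    mul_nonneg (div_nonneg (Real.sqrt_nonneg _) (by positivity)) hC0
  refine ContinuousLinearMap.opNorm_le_bound _ hK0 fun x => ?_
  have hTx : ∀ i, (Matrix.toEuclideanCLM (𝕜 := ℝ) M x) i = ∑ j, M i j * x j := fun i => rfl
  have hsq : ‖Matrix.toEuclideanCLM (𝕜 := ℝ) M x‖ ^ 2
      ≤ (Real.sqrt d / (ε * m) * C * ‖x‖) ^ 2 := by
    rw [norm_sq_eq]
    simp_rw [hTx]
    have step1 : ∑ i, (∑ j, M i j * x j) ^ 2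
        ≤ ∑ i, ((∑ j, (M i j) ^ 2) * ∑ j, (x j) ^ 2) :=
      Finset.sum_le_sum fun i _ => Finset.sum_mul_sq_le_sq_mul_sq _ _ _
    have step2 : ∑ i, ((∑ j, (M i j) ^ 2) * ∑ j, (x j) ^ 2)
        = (∑ i, ∑ j, (M i j) ^ 2) * ‖x‖ ^ 2 := by
      rw [← Finset.sum_mul, norm_sq_eq]
    have step3 : (∑ i, ∑ j, (M i j) ^ 2) ≤ d * ((ε * m)⁻¹ ^ 2 * C ^ 2) := by
      calc ∑ i, ∑ j, (M i j) ^ 2 ≤ ∑ i : Fin d, ∑ _j : Fin d, (ε * m)⁻¹ ^ 2 * A i :=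
            Finset.sum_le_sum fun i _ => Finset.sum_le_sum fun j _ => hMsq i j
        _ = d * ((ε * m)⁻¹ ^ 2 * ∑ i, A i) := by
            simp [Finset.sum_const, Finset.card_univ, Finset.mul_sum]
        _ ≤ d * ((ε * m)⁻¹ ^ 2 * C ^ 2) := by
            refine mul_le_mul_of_nonneg_left (mul_le_mul_of_nonneg_left hAsum (by positivity))
              (Nat.cast_nonneg d)
    calc ∑ i, (∑ j, M i j * x j) ^ 2
        ≤ (∑ i, ∑ j, (M i j) ^ 2) * ‖x‖ ^ 2 := step2 ▸ step1
      _ ≤ (d * ((ε * m)⁻¹ ^ 2 * C ^ 2)) * ‖x‖ ^ 2 :=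
          mul_le_mul_of_nonneg_right step3 (sq_nonneg _)
      _ = (Real.sqrt d / (ε * m) * C * ‖x‖) ^ 2 := by
          rw [mul_pow, mul_pow, div_pow, Real.sq_sqrt (Nat.cast_nonneg d), inv_pow]
          ring
  have := Real.sqrt_le_sqrt hsq
  rwa [Real.sqrt_sq (norm_nonneg _), Real.sqrt_sq (by positivity)] at this
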